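/- Let Δ ⊆ ℝ be an interval and g: Δ → ℝ a C^3 diffeomorphism onto g(Δ) with negative Schwarzian derivative. If J ⊆ Δ and g(Δ) contains the η-scaled neighborhood of g(J), then Δ contains the (½η^3(2+η)^{-2})-scaled neighborhood of J. -/

import Mathlib

/-!
For `f' > 0` the function `u = (f')^(-1/2)` satisfies `u'' = -(u / 2) · Sf`, so a negative
Schwarzian derivative makes `u` convex, while for a Möbius map `u` is affine. Compare `f` with the
Möbius map `N` that agrees with it at `x₁ < a < x₂`: if `f < N` at some `b ∈ (a, x₂)`, the mean
value theorem produces points `ξ₁ < ξ₂ < ξ₃` with `f' = N'`, `f' < N'`, `f' > N'`, so the convex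
difference of the two `u`'s is `0`, positive, negative there, which is impossible. Hence `f`
expands cross-ratios: `|J| |T| |f L| |f R| ≤ |L| |R| |f J| |f T|` for `T = L ∪ J ∪ R`.
With `|f L| = |f R| = η |f J|` this gives `η² |J| ≤ (1 + 2η) min (|L|, |R|)`, and
`η² / (1 + 2η) ≥ ½ η³ (2 + η)⁻²`. A decreasing `g` is handled through `-g`, which has the same
Schwarzian derivative.
-/

open Set

/-- The Schwarzian derivative of `f` computed with derivatives within a set `s`. -/
noncomputable def SchwarzianWithin (f : ℝ → ℝ) (s : Set ℝ) (x : ℝ) : ℝ :=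
  iteratedDerivWithin 3 f s x / derivWithin f s x
    - 3 / 2 * (iteratedDerivWithin 2 f s x / derivWithin f s x) ^ 2

open Filter Topology

noncomputable def schwarzian (f : ℝ → ℝ) (x : ℝ) : ℝ :=
  iteratedDeriv 3 f x / deriv f x - 3 / 2 * (iteratedDeriv 2 f x / deriv f x) ^ 2

theorem iteratedDerivWithin_of_mem_nhds {𝕜 F : Type*} [NontriviallyNormedField 𝕜]
    [NormedAddCommGroup F] [NormedSpace 𝕜 F] {f : 𝕜 → F} {s : Set 𝕜} {x : 𝕜} (n : ℕ)
    (h : s ∈ 𝓝 x) : iteratedDerivWithin n f s x = iteratedDeriv n f x := by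
  simp only [iteratedDerivWithin, iteratedDeriv, ← iteratedFDerivWithin_univ,
    iteratedFDerivWithin_congr_set (eventuallyEq_univ.2 h)]

theorem schwarzianWithin_of_mem_nhds {f : ℝ → ℝ} {s : Set ℝ} {x : ℝ} (h : s ∈ 𝓝 x) :
    SchwarzianWithin f s x = schwarzian f x := by
  simp only [SchwarzianWithin, schwarzian, iteratedDerivWithin_of_mem_nhds _ h,
    derivWithin_of_mem_nhds h]

theorem schwarzian_neg (f : ℝ → ℝ) (x : ℝ) : schwarzian (-f) x = schwarzian f x := by
  simp only [schwarzian, iteratedDeriv_neg, deriv.neg, neg_div_neg_eq]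

theorem IsPreconnected.forall_pos_or_forall_neg {X : Type*} [TopologicalSpace X] {s : Set X}
    (hs : IsPreconnected s) {f : X → ℝ} (hf : ContinuousOn f s) (h0 : ∀ x ∈ s, f x ≠ 0) :
    (∀ x ∈ s, 0 < f x) ∨ ∀ x ∈ s, f x < 0 := by
  by_contra! h
  obtain ⟨⟨p, hp, hfp⟩, q, hq, hfq⟩ := h
  obtain ⟨z, hz, hfz⟩ := hs.intermediate_value hp hq hf ⟨hfp, hfq⟩
  exact h0 z hz hfz

theorem convexOn_inv_sqrt_of_hasDerivAt {s : Set ℝ} (hs : Convex ℝ s) (hso : IsOpen s)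
    {f₁ f₂ f₃ : ℝ → ℝ} (h₁ : ∀ x ∈ s, HasDerivAt f₁ (f₂ x) x)
    (h₂ : ∀ x ∈ s, HasDerivAt f₂ (f₃ x) x) (hpos : ∀ x ∈ s, 0 < f₁ x)
    (hS : ∀ x ∈ s, f₃ x / f₁ x - 3 / 2 * (f₂ x / f₁ x) ^ 2 ≤ 0) :
    ConvexOn ℝ s fun x ↦ (√(f₁ x))⁻¹ := by
  set u : ℝ → ℝ := fun x ↦ (√(f₁ x))⁻¹
  have hu : ∀ x ∈ s, HasDerivAt u (-f₂ x * u x ^ 3 / 2) x := fun x hx ↦ by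
    have hsqrt := Real.sqrt_pos.2 (hpos x hx)
    refine (((h₁ x hx).sqrt (hpos x hx).ne').inv hsqrt.ne').congr_deriv ?_
    simp only [u]
    field_simp
  have hu' : ∀ x ∈ s, HasDerivAt (fun x ↦ -f₂ x * u x ^ 3 / 2)
      (u x / 2 * -(f₃ x / f₁ x - 3 / 2 * (f₂ x / f₁ x) ^ 2)) x := fun x hx ↦ by
    have hinv : (f₁ x)⁻¹ = u x ^ 2 := by simp [u, inv_pow, Real.sq_sqrt (hpos x hx).le]
    refine (((h₂ x hx).neg.mul ((hu x hx).pow 3)).div_const 2).congr_deriv ?_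
    simp only [div_eq_mul_inv _ (f₁ x), hinv, Nat.cast_ofNat, Pi.pow_apply, Pi.neg_apply]
    ring
  rw [← hso.interior_eq] at hu hu'
  refine convexOn_of_hasDerivWithinAt2_nonneg hs ?_ (fun x hx ↦ (hu x hx).hasDerivWithinAt)
    (fun x hx ↦ (hu' x hx).hasDerivWithinAt) fun x hx ↦ ?_
  · rw [← hso.interior_eq]
    exact fun x hx ↦ (hu x hx).continuousAt.continuousWithinAt
  · rw [hso.interior_eq] at hx
    exact mul_nonneg (by positivity) (neg_nonneg.2 (hS x hx))

theorem convexOn_inv_sqrt_deriv_of_schwarzian_nonpos {U : Set ℝ} (hU : IsOpen U)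
    (hUc : Convex ℝ U) {f : ℝ → ℝ} (hf : ContDiffOn ℝ 3 f U) (hpos : ∀ x ∈ U, 0 < deriv f x)
    (hS : ∀ x ∈ U, schwarzian f x ≤ 0) : ConvexOn ℝ U fun x ↦ (√(deriv f x))⁻¹ := by
  have hf₁ : ContDiffOn ℝ 2 (deriv f) U := hf.deriv_of_isOpen hU (by norm_num)
  have hf₂ : ContDiffOn ℝ 1 (deriv (deriv f)) U := hf₁.deriv_of_isOpen hU (by norm_num)
  have hasDeriv {n : WithTop ℕ∞} {φ : ℝ → ℝ} (hφ : ContDiffOn ℝ n φ U) (hn : n ≠ 0) :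
      ∀ x ∈ U, HasDerivAt φ (deriv φ x) x := fun x hx ↦
    ((hφ.differentiableOn hn).differentiableAt (hU.mem_nhds hx)).hasDerivAt
  refine convexOn_inv_sqrt_of_hasDerivAt hUc hU (hasDeriv hf₁ (by norm_num))
    (hasDeriv hf₂ (by norm_num)) hpos fun x hx ↦ ?_
  simpa [schwarzian, iteratedDeriv_succ] using hS x hx

theorem le_of_convexOn_inv_sqrt_sub {f N f' N' : ℝ → ℝ} {x₁ a b x₂ : ℝ} (h₁ : x₁ < a)
    (h₂ : a < b) (h₃ : b < x₂) (hfc : ContinuousOn f (Icc x₁ x₂))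
    (hNc : ContinuousOn N (Icc x₁ x₂)) (hf : ∀ x ∈ Ioo x₁ x₂, HasDerivAt f (f' x) x)
    (hN : ∀ x ∈ Ioo x₁ x₂, HasDerivAt N (N' x) x) (hf'pos : ∀ x ∈ Ioo x₁ x₂, 0 < f' x)
    (hN'pos : ∀ x ∈ Ioo x₁ x₂, 0 < N' x)
    (hconv : ConvexOn ℝ (Ioo x₁ x₂) fun x ↦ (√(f' x))⁻¹ - (√(N' x))⁻¹)
    (hx₁ : f x₁ = N x₁) (ha : f a = N a) (hx₂ : f x₂ = N x₂) : N b ≤ f b := by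
  by_contra! hb
  have slope {p q : ℝ} (hp : x₁ ≤ p) (hpq : p < q) (hq : q ≤ x₂) :
      ∃ ξ ∈ Ioo p q, f' ξ - N' ξ = ((f q - N q) - (f p - N p)) / (q - p) :=
    exists_hasDerivAt_eq_slope (fun x ↦ f x - N x) _ hpq
      ((hfc.sub hNc).mono (Icc_subset_Icc hp hq))
      fun x hx ↦ (hf x ⟨hp.trans_lt hx.1, hx.2.trans_le hq⟩).sub
        (hN x ⟨hp.trans_lt hx.1, hx.2.trans_le hq⟩)
  obtain ⟨ξ₁, hξ₁, e₁⟩ := slope le_rfl h₁ (h₂.trans h₃).le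
  obtain ⟨ξ₂, hξ₂, e₂⟩ := slope h₁.le h₂ h₃.le
  obtain ⟨ξ₃, hξ₃, e₃⟩ := slope (h₁.trans h₂).le h₃ le_rfl
  rw [hx₁, ha, sub_self, sub_self, sub_self, zero_div, sub_eq_zero] at e₁
  have hlt₂ : f' ξ₂ < N' ξ₂ := by
    rw [← sub_neg, e₂, ha, sub_self, sub_zero]
    exact div_neg_of_neg_of_pos (by linarith) (by linarith)
  have hlt₃ : N' ξ₃ < f' ξ₃ := by
    rw [← sub_pos, e₃, hx₂, sub_self, zero_sub]
    exact div_pos (by linarith) (by linarith)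
  have mem {ξ p q : ℝ} (h : ξ ∈ Ioo p q) (hp : x₁ ≤ p) (hq : q ≤ x₂) : ξ ∈ Ioo x₁ x₂ :=
    ⟨hp.trans_lt h.1, h.2.trans_le hq⟩
  have hξ₁' := mem hξ₁ le_rfl (h₂.trans h₃).le
  have hξ₂' := mem hξ₂ h₁.le h₃.le
  have hξ₃' := mem hξ₃ (h₁.trans h₂).le le_rfl
  have hξ₁₂ : ξ₁ < ξ₂ := hξ₁.2.trans hξ₂.1
  have hξ₂₃ : ξ₂ < ξ₃ := hξ₂.2.trans hξ₃.1
  have key := hconv.le_on_segment hξ₁' hξ₃' (Icc_subset_segment ⟨hξ₁₂.le, hξ₂₃.le⟩)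
  have pos₂ : 0 < (√(f' ξ₂))⁻¹ - (√(N' ξ₂))⁻¹ := sub_pos.2 <| inv_strictAnti₀
    (Real.sqrt_pos.2 (hf'pos ξ₂ hξ₂')) (Real.sqrt_lt_sqrt (hf'pos ξ₂ hξ₂').le hlt₂)
  have neg₃ : (√(f' ξ₃))⁻¹ - (√(N' ξ₃))⁻¹ < 0 := sub_neg.2 <| inv_strictAnti₀
    (Real.sqrt_pos.2 (hN'pos ξ₃ hξ₃')) (Real.sqrt_lt_sqrt (hN'pos ξ₃ hξ₃').le hlt₃)
  rw [e₁, sub_self] at key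
  linarith [max_le le_rfl neg₃.le]

theorem crossRatio_le_of_schwarzian_nonpos {f : ℝ → ℝ} {x₁ a b x₂ : ℝ} (h₁ : x₁ < a)
    (h₂ : a < b) (h₃ : b < x₂) (hfc : ContinuousOn f (Icc x₁ x₂))
    (hf : ContDiffOn ℝ 3 f (Ioo x₁ x₂)) (hpos : ∀ x ∈ Ioo x₁ x₂, 0 < deriv f x)
    (hS : ∀ x ∈ Ioo x₁ x₂, schwarzian f x ≤ 0) :
    (b - a) * (x₂ - x₁) * ((f a - f x₁) * (f x₂ - f b)) ≤
      (a - x₁) * (x₂ - b) * ((f b - f a) * (f x₂ - f x₁)) := by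
  have hmono : StrictMonoOn f (Icc x₁ x₂) :=
    strictMonoOn_of_deriv_pos (convex_Icc _ _) hfc (by rwa [interior_Icc])
  have hx₁I : x₁ ∈ Icc x₁ x₂ := left_mem_Icc.2 (h₁.trans (h₂.trans h₃)).le
  have haI : a ∈ Icc x₁ x₂ := ⟨h₁.le, (h₂.trans h₃).le⟩
  have hbI : b ∈ Icc x₁ x₂ := ⟨(h₁.trans h₂).le, h₃.le⟩
  have hx₂I : x₂ ∈ Icc x₁ x₂ := right_mem_Icc.2 (h₁.trans (h₂.trans h₃)).le
  have hfa := hmono hx₁I haI h₁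
  have hfb := hmono haI hbI h₂
  have hfx₂ := hmono hbI hx₂I h₃
  -- the Möbius map `N = P / Q` agreeing with `f` at `x₁`, `a`, `x₂`
  set α := (f x₂ - f a) * (a - x₁)
  set β := (f a - f x₁) * (x₂ - a)
  have hα : 0 < α := mul_pos (by linarith) (by linarith)
  have hβ : 0 < β := mul_pos (by linarith) (by linarith)
  set Q : ℝ → ℝ := fun x ↦ α * (x₂ - x) + β * (x - x₁)
  set P : ℝ → ℝ := fun x ↦ f x₁ * α * (x₂ - x) + f x₂ * β * (x - x₁)
  set D := α * β * (f x₂ - f x₁) * (x₂ - x₁)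
  have hD : 0 < D := mul_pos (mul_pos (mul_pos hα hβ) (by linarith)) (by linarith)
  have hQ : ∀ x ∈ Icc x₁ x₂, 0 < Q x := fun x hx ↦ by
    nlinarith [mul_nonneg hα.le (sub_nonneg.2 hx.2), mul_nonneg hβ.le (sub_nonneg.2 hx.1),
      mul_pos hα hβ]
  have hNderiv : ∀ x ∈ Icc x₁ x₂, HasDerivAt (fun x ↦ P x / Q x) (D / Q x ^ 2) x := fun x hx ↦ by
    have hQ' : HasDerivAt Q (β - α) x :=
      ((((hasDerivAt_id x).const_sub x₂).const_mul α).add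
        (((hasDerivAt_id x).sub_const x₁).const_mul β)).congr_deriv (by ring)
    have hP' : HasDerivAt P (f x₂ * β - f x₁ * α) x :=
      ((((hasDerivAt_id x).const_sub x₂).const_mul (f x₁ * α)).add
        (((hasDerivAt_id x).sub_const x₁).const_mul (f x₂ * β))).congr_deriv (by ring)
    refine (hP'.div hQ' (hQ x hx).ne').congr_deriv ?_
    simp only [P, Q, D]
    ring
  have hℓ : ConcaveOn ℝ (Ioo x₁ x₂) fun x ↦ (√(D / Q x ^ 2))⁻¹ := by
    refine ConcaveOn.congr (f := fun x ↦ Q x / √D)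
      ⟨convex_Ioo _ _, fun x _ y _ s t _ _ hst ↦ le_of_eq ?_⟩ fun x hx ↦ ?_
    · simp only [Q, smul_eq_mul]
      linear_combination (α * x₂ - β * x₁) / √D * hst
    · rw [Real.sqrt_div' _ (sq_nonneg _), Real.sqrt_sq (hQ x (Ioo_subset_Icc_self hx)).le, inv_div]
  have hNb : P b / Q b ≤ f b := by
    refine le_of_convexOn_inv_sqrt_sub h₁ h₂ h₃ hfc
      (fun x hx ↦ (hNderiv x hx).continuousAt.continuousWithinAt)
      (fun x hx ↦ ((hf.differentiableOn (by norm_num)).differentiableAt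
        (isOpen_Ioo.mem_nhds hx)).hasDerivAt) (fun x hx ↦ hNderiv x (Ioo_subset_Icc_self hx)) hpos
      (fun x hx ↦ div_pos hD (pow_pos (hQ x (Ioo_subset_Icc_self hx)) 2))
      ((convexOn_inv_sqrt_deriv_of_schwarzian_nonpos isOpen_Ioo (convex_Ioo _ _) hf hpos hS).sub hℓ)
      ?_ ?_ ?_
    · rw [eq_div_iff (hQ _ hx₁I).ne']; ring
    · rw [eq_div_iff (hQ _ haI).ne']; ring
    · rw [eq_div_iff (hQ _ hx₂I).ne']; ring
  have hPb : P b ≤ f b * Q b := (div_le_iff₀ (hQ b hbI)).1 hNb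
  have key : ((a - x₁) * (x₂ - b) * ((f b - f a) * (f x₂ - f x₁)) -
      (b - a) * (x₂ - x₁) * ((f a - f x₁) * (f x₂ - f b))) * Q b =
      ((a - x₁) * (x₂ - b) * (f x₂ - f x₁) + (b - a) * (x₂ - x₁) * (f a - f x₁)) *
        (f b * Q b - P b) := by
    simp only [P, Q, α, β]
    ring
  have hcoef : 0 ≤ (a - x₁) * (x₂ - b) * (f x₂ - f x₁) + (b - a) * (x₂ - x₁) * (f a - f x₁) := by
    have hx : 0 < x₂ - x₁ := by linarith
    have hy : 0 < f x₂ - f x₁ := by linarith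
    exact add_nonneg (mul_pos (mul_pos (sub_pos.2 h₁) (sub_pos.2 h₃)) hy).le
      (mul_pos (mul_pos (sub_pos.2 h₂) hx) (sub_pos.2 hfa)).le
  exact sub_nonneg.1 <| nonneg_of_mul_nonneg_left
    (key ▸ mul_nonneg hcoef (sub_nonneg.2 hPb)) (hQ b hbI)

theorem collar_le_of_crossRatio {η L J R : ℝ} (hη : 0 < η) (hL : 0 < L) (hJ : 0 < J)
    (hR : 0 < R) (h : J * (L + J + R) * η ^ 2 ≤ L * R * (1 + 2 * η)) :
    1 / 2 * η ^ 3 * (2 + η)⁻¹ ^ 2 * J ≤ L := by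
  have hJL : η ^ 2 * J ≤ (1 + 2 * η) * L := by
    refine le_of_mul_le_mul_right ?_ hR
    nlinarith [mul_pos (mul_pos hJ hJ) (pow_pos hη 2), mul_pos (mul_pos hJ hL) (pow_pos hη 2)]
  have hK : 1 / 2 * η ^ 3 * (2 + η)⁻¹ ^ 2 * (1 + 2 * η) ≤ η ^ 2 := by
    rw [inv_pow, ← div_eq_mul_inv, div_mul_eq_mul_div, div_le_iff₀ (by positivity)]
    nlinarith [pow_pos hη 2, pow_pos hη 3]
  refine le_of_mul_le_mul_left ?_ (by positivity : (0 : ℝ) < 1 + 2 * η)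
  nlinarith [mul_le_mul_of_nonneg_right hK hJ.le]

theorem Icc_collar_subset_of_deriv_pos {g : ℝ → ℝ} {Δ : Set ℝ} {η a b c d : ℝ} (hη : 0 < η)
    (hΔ : Δ.OrdConnected) (hg : ContDiffOn ℝ 3 g Δ) (hpos : ∀ x ∈ interior Δ, 0 < deriv g x)
    (hS : ∀ x ∈ interior Δ, schwarzian g x ≤ 0) (hab : a < b) (hJ : Icc a b ⊆ Δ)
    (hcd : g '' Icc a b = Icc c d) (hN : Icc (c - η * (d - c)) (d + η * (d - c)) ⊆ g '' Δ) :
    Icc (a - (1 / 2 * η ^ 3 * (2 + η)⁻¹ ^ 2) * (b - a))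
      (b + (1 / 2 * η ^ 3 * (2 + η)⁻¹ ^ 2) * (b - a)) ⊆ Δ := by
  have hmono : StrictMonoOn g Δ := strictMonoOn_of_deriv_pos hΔ.convex hg.continuousOn hpos
  have haΔ := hJ (left_mem_Icc.2 hab.le)
  have hbΔ := hJ (right_mem_Icc.2 hab.le)
  have hgab := hmono haΔ hbΔ hab
  obtain ⟨rfl, rfl⟩ : g a = c ∧ g b = d := by
    rwa [(hg.continuousOn.mono hJ).image_Icc_of_monotoneOn hab.le (hmono.monotoneOn.mono hJ),
      Icc_eq_Icc_iff hgab.le] at hcd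
  obtain ⟨x₁, hx₁, hgx₁⟩ := hN ⟨le_rfl, by nlinarith⟩
  obtain ⟨x₂, hx₂, hgx₂⟩ := hN ⟨by nlinarith, le_rfl⟩
  have h₁ : x₁ < a := (hmono.lt_iff_lt hx₁ haΔ).1 (by rw [hgx₁]; nlinarith)
  have h₃ : b < x₂ := (hmono.lt_iff_lt hbΔ hx₂).1 (by rw [hgx₂]; nlinarith)
  have hI : Icc x₁ x₂ ⊆ Δ := hΔ.out hx₁ hx₂
  have hIoo : Ioo x₁ x₂ ⊆ interior Δ :=
    interior_maximal (Ioo_subset_Icc_self.trans hI) isOpen_Ioo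
  have cross := crossRatio_le_of_schwarzian_nonpos h₁ hab h₃ (hg.continuousOn.mono hI)
    (hg.mono (Ioo_subset_Icc_self.trans hI)) (fun x hx ↦ hpos x (hIoo hx))
    fun x hx ↦ hS x (hIoo hx)
  rw [hgx₁, hgx₂] at cross
  have key : (b - a) * ((a - x₁) + (b - a) + (x₂ - b)) * η ^ 2 ≤
      (a - x₁) * (x₂ - b) * (1 + 2 * η) :=
    le_of_mul_le_mul_right (by linear_combination cross) (pow_pos (sub_pos.2 hgab) 2)
  refine (Icc_subset_Icc ?_ ?_).trans hI
  · linarith [collar_le_of_crossRatio hη (sub_pos.2 h₁) (sub_pos.2 hab) (sub_pos.2 h₃) key]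
  · linarith [collar_le_of_crossRatio hη (sub_pos.2 h₃) (sub_pos.2 hab) (sub_pos.2 h₁)
      (by linarith [key])]

theorem koebe_collar_general (g : ℝ → ℝ) (Δ : Set ℝ) (η : ℝ) (hη : 0 < η)
    (hΔ : Δ.OrdConnected)
    (hg : ContDiffOn ℝ 3 g Δ)
    (hg' : ∀ x ∈ Δ, derivWithin g Δ x ≠ 0)
    (hS : ∀ x ∈ Δ, SchwarzianWithin g Δ x < 0)
    (a b : ℝ) (hJ : Set.Icc a b ⊆ Δ)
    (c d : ℝ) (hcd : g '' Set.Icc a b = Set.Icc c d)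
    (hN : Set.Icc (c - η * (d - c)) (d + η * (d - c)) ⊆ g '' Δ) :
    Set.Icc (a - (1 / 2 * η ^ 3 * (2 + η)⁻¹ ^ 2) * (b - a))
        (b + (1 / 2 * η ^ 3 * (2 + η)⁻¹ ^ 2) * (b - a)) ⊆ Δ := by
  obtain hba | hab := le_or_gt b a
  · have : (1 / 2 * η ^ 3 * (2 + η)⁻¹ ^ 2) * (b - a) ≤ 0 :=
      mul_nonpos_of_nonneg_of_nonpos (by positivity) (sub_nonpos.2 hba)
    exact (Icc_subset_Icc (by linarith) (by linarith)).trans hJ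
  have hnhds : ∀ x ∈ interior Δ, Δ ∈ 𝓝 x := fun x hx ↦ mem_interior_iff_mem_nhds.1 hx
  have hS' : ∀ x ∈ interior Δ, schwarzian g x ≤ 0 := fun x hx ↦
    schwarzianWithin_of_mem_nhds (hnhds x hx) ▸ (hS x (interior_subset hx)).le
  have hg'' : ∀ x ∈ interior Δ, deriv g x ≠ 0 := fun x hx ↦
    derivWithin_of_mem_nhds (f := g) (hnhds x hx) ▸ hg' x (interior_subset hx)
  rcases hΔ.interior.isPreconnected.forall_pos_or_forall_neg
    ((hg.mono interior_subset).continuousOn_deriv_of_isOpen isOpen_interior (by norm_num)) hg''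
    with hpos | hneg
  · exact Icc_collar_subset_of_deriv_pos hη hΔ hg hpos hS' hab hJ hcd hN
  · refine Icc_collar_subset_of_deriv_pos (g := -g) (c := -d) (d := -c) hη hΔ hg.neg
      (fun x hx ↦ by simpa [deriv.neg] using hneg x hx) (fun x hx ↦ schwarzian_neg g x ▸ hS' x hx)
      hab hJ ?_ fun y hy ↦ ?_
    · rw [show -g = Neg.neg ∘ g from rfl, image_comp, hcd, image_neg_Icc]
    · obtain ⟨x, hx, hgx⟩ := @hN (-y) ⟨by linarith [hy.2], by linarith [hy.1]⟩
      exact ⟨x, hx, by simp [hgx]⟩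

/-- If `g : Δ → ℝ` is a `C³` diffeomorphism onto its image with negative Schwarzian
derivative, `J = [a,b] ⊆ Δ` with `g(J) = [c,d]`, and `g(Δ)` contains the `η`-scaled
neighborhood of `g(J)`, then `Δ` contains the `(½η³(2+η)⁻²)`-scaled neighborhood of `J`. -/
theorem koebe_collar (g : ℝ → ℝ) (Δ : Set ℝ) (η : ℝ) (hη : 0 < η)
    (hΔ : Δ.OrdConnected) (hΔu : UniqueDiffOn ℝ Δ)
    (hg : ContDiffOn ℝ 3 g Δ) (hinj : Set.InjOn g Δ)
    (hg' : ∀ x ∈ Δ, derivWithin g Δ x ≠ 0)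
    (hS : ∀ x ∈ Δ, SchwarzianWithin g Δ x < 0)
    (a b : ℝ) (hab : a ≤ b) (hJ : Set.Icc a b ⊆ Δ)
    (c d : ℝ) (hcd : g '' Set.Icc a b = Set.Icc c d)
    (hN : Set.Icc (c - η * (d - c)) (d + η * (d - c)) ⊆ g '' Δ) :
    Set.Icc (a - (1 / 2 * η ^ 3 * (2 + η)⁻¹ ^ 2) * (b - a))
        (b + (1 / 2 * η ^ 3 * (2 + η)⁻¹ ^ 2) * (b - a)) ⊆ Δ :=
  koebe_collar_general g Δ η hη hΔ hg hg' hS a b hJ c d hcd hN
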